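/- Let W : ℝ^{2×2} → [0,∞) be continuous, three times continuously differentiable on a neighborhood of SO(2), frame indifferent (W(RF) = W(F) for all R ∈ SO(2) and F ∈ ℝ^{2×2}), and satisfy W(F) = 0 if and only if F ∈ SO(2). Then there exist δ ∈ (0,1] and C > 0 such that for every F ∈ ℝ^{2×2} with ‖F‖ ≤ δ one has |W(Id + F) − (1/2) D²W(Id)[sym F, sym F]| ≤ C‖F‖³. -/

import Mathlib

open Matrix

attribute [local instance] Matrix.normedAddCommGroup Matrix.normedSpace

/-- The Frobenius norm of a real 2×2 matrix. -/
noncomputable def frobNorm (A : Matrix (Fin 2) (Fin 2) ℝ) : ℝ :=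
  Real.sqrt (∑ i : Fin 2, ∑ j : Fin 2, (A i j) ^ 2)

/-- The symmetric part of a 2×2 matrix. -/
noncomputable def symPart (F : Matrix (Fin 2) (Fin 2) ℝ) : Matrix (Fin 2) (Fin 2) ℝ :=
  (1 / 2 : ℝ) • (F + Fᵀ)

/-- The quadratic form `Q(F) = D²W(Id)[F,F]` associated to the Hessian of `W` at the
identity matrix. -/
noncomputable def hessQ (W : Matrix (Fin 2) (Fin 2) ℝ → ℝ)
    (F : Matrix (Fin 2) (Fin 2) ℝ) : ℝ :=
  fderiv ℝ (fderiv ℝ W) 1 F F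

/-!
Since `W ≥ 0` vanishes on `SO(2)`, every rotation is a minimum of `W`: so `W(Id) = 0`,
`DW(Id) = 0`, and differentiating `DW(R θ) = 0` along `R θ = cos θ Id + sin θ J` at `θ = 0`
shows that the Hessian annihilates the infinitesimal rotation `J`. As `F - sym F` is a multiple
of `J`, the symmetric Hessian satisfies `D²W(Id)[F,F] = D²W(Id)[sym F, sym F]`. The estimate
is then the second-order Taylor expansion at `Id`: `D²W` is Lipschitz near `Id` because `W`
is `C³`, and the mean value inequality, applied first to `DW` and then to `W`, gives a cubic
remainder.
-/

open Metric
open scoped NNReal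

section Calculus

variable {E F : Type*} [NormedAddCommGroup E] [NormedSpace ℝ E]
  [NormedAddCommGroup F] [NormedSpace ℝ F]

theorem norm_sub_sub_apply_le_of_lipschitzOnWith {f : E → F} {f' : E → E →L[ℝ] F}
    {x₀ x : E} {r : ℝ} {K : ℝ≥0}
    (hf : ∀ y ∈ closedBall x₀ r, HasFDerivAt f (f' y) y)
    (hf' : LipschitzOnWith K f' (closedBall x₀ r)) (hx : x ∈ closedBall x₀ r) :
    ‖f x - f x₀ - f' x₀ (x - x₀)‖ ≤ K * ‖x - x₀‖ ^ 2 := by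
  have hx₀ : x₀ ∈ closedBall x₀ r := mem_closedBall_self (dist_nonneg.trans hx)
  have hsub : closedBall x₀ ‖x - x₀‖ ⊆ closedBall x₀ r :=
    closedBall_subset_closedBall (by rwa [← dist_eq_norm])
  have hbound : ∀ y ∈ closedBall x₀ ‖x - x₀‖, ‖f' y - f' x₀‖ ≤ K * ‖x - x₀‖ := fun y hy =>
    calc ‖f' y - f' x₀‖ ≤ K * ‖y - x₀‖ := by
          simpa only [dist_eq_norm] using hf'.dist_le_mul y (hsub hy) x₀ hx₀
      _ ≤ K * ‖x - x₀‖ := by gcongr; rwa [← dist_eq_norm]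
  calc ‖f x - f x₀ - f' x₀ (x - x₀)‖ ≤ K * ‖x - x₀‖ * ‖x - x₀‖ :=
        (convex_closedBall x₀ _).norm_image_sub_le_of_norm_hasFDerivWithin_le'
          (fun y hy => (hf y (hsub hy)).hasFDerivWithinAt) hbound
          (mem_closedBall_self (norm_nonneg _)) (by simp [dist_eq_norm])
    _ = K * ‖x - x₀‖ ^ 2 := by ring

theorem ContinuousLinearMap.hasFDerivAt_apply_sub_apply_sub (B : E →L[ℝ] E →L[ℝ] F)
    (hB : ∀ v w, B v w = B w v) (x₀ y : E) :
    HasFDerivAt (fun y => B (y - x₀) (y - x₀)) ((2 : ℝ) • B (y - x₀)) y := by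
  have hsub : HasFDerivAt (fun y : E => y - x₀) (ContinuousLinearMap.id ℝ E) y :=
    (hasFDerivAt_id y).sub_const x₀
  refine ((B.hasFDerivAt.comp y hsub).clm_apply hsub).congr_fderiv ?_
  ext v
  simp [hB v, two_smul]

theorem norm_sub_taylor_two_le_of_lipschitzOnWith {f : E → F} {f' : E → E →L[ℝ] F}
    {f'' : E → E →L[ℝ] E →L[ℝ] F} {x₀ x : E} {r : ℝ} {K : ℝ≥0}
    (hf : ∀ y ∈ closedBall x₀ r, HasFDerivAt f (f' y) y)
    (hf' : ∀ y ∈ closedBall x₀ r, HasFDerivAt f' (f'' y) y)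
    (hf'' : LipschitzOnWith K f'' (closedBall x₀ r)) (hsymm : ∀ v w, f'' x₀ v w = f'' x₀ w v)
    (hx : x ∈ closedBall x₀ r) :
    ‖f x - f x₀ - f' x₀ (x - x₀) - (2 : ℝ)⁻¹ • f'' x₀ (x - x₀) (x - x₀)‖ ≤ K * ‖x - x₀‖ ^ 3 := by
  have hsub : closedBall x₀ ‖x - x₀‖ ⊆ closedBall x₀ r :=
    closedBall_subset_closedBall (by rwa [← dist_eq_norm])
  set g : E → F := fun y => f y - (2 : ℝ)⁻¹ • f'' x₀ (y - x₀) (y - x₀)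
  have hg : ∀ y ∈ closedBall x₀ r, HasFDerivAt g (f' y - f'' x₀ (y - x₀)) y := fun y hy => by
    refine ((hf y hy).sub
      (((f'' x₀).hasFDerivAt_apply_sub_apply_sub hsymm x₀ y).const_smul (2 : ℝ)⁻¹)).congr_fderiv ?_
    rw [smul_smul, inv_mul_cancel₀ two_ne_zero, one_smul]
  have hbound : ∀ y ∈ closedBall x₀ ‖x - x₀‖,
      ‖(f' y - f'' x₀ (y - x₀)) - f' x₀‖ ≤ K * ‖x - x₀‖ ^ 2 := fun y hy =>
    calc ‖(f' y - f'' x₀ (y - x₀)) - f' x₀‖ = ‖f' y - f' x₀ - f'' x₀ (y - x₀)‖ := by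
          rw [sub_right_comm]
      _ ≤ K * ‖y - x₀‖ ^ 2 := norm_sub_sub_apply_le_of_lipschitzOnWith hf' hf'' (hsub hy)
      _ ≤ K * ‖x - x₀‖ ^ 2 := by gcongr; rwa [← dist_eq_norm]
  have key : ‖g x - g x₀ - f' x₀ (x - x₀)‖ ≤ K * ‖x - x₀‖ ^ 2 * ‖x - x₀‖ :=
    (convex_closedBall x₀ _).norm_image_sub_le_of_norm_hasFDerivWithin_le'
      (fun y hy => (hg y (hsub hy)).hasFDerivWithinAt) hbound
      (mem_closedBall_self (norm_nonneg _)) (by simp [dist_eq_norm])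
  calc _ = ‖g x - g x₀ - f' x₀ (x - x₀)‖ := by
          simp only [g, sub_self, map_zero, smul_zero, sub_zero]; abel_nf
    _ ≤ K * ‖x - x₀‖ ^ 2 * ‖x - x₀‖ := key
    _ = K * ‖x - x₀‖ ^ 3 := by ring

theorem ContDiffAt.exists_norm_sub_taylor_two_le {f : E → F} {x₀ : E} (hf : ContDiffAt ℝ 3 f x₀) :
    ∃ K > 0, ∃ r > 0, ∀ h : E, ‖h‖ ≤ r →
      ‖f (x₀ + h) - f x₀ - fderiv ℝ f x₀ h - (2 : ℝ)⁻¹ • fderiv ℝ (fderiv ℝ f) x₀ h h‖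
        ≤ K * ‖h‖ ^ 3 := by
  have hf1 : ContDiffAt ℝ 2 (fderiv ℝ f) x₀ := hf.fderiv_right (by norm_num)
  obtain ⟨K, t, ht, hlip⟩ := (hf1.fderiv_right (m := 1) le_rfl).exists_lipschitzOnWith
  have hnhds : ∀ᶠ y in nhds x₀, ContDiffAt ℝ 3 f y ∧ y ∈ t :=
    (hf.eventually (by simp)).and ht
  obtain ⟨r, hr, hball⟩ := nhds_basis_closedBall.mem_iff.1 hnhds
  refine ⟨K + 1, by positivity, r, hr, fun h hh => ?_⟩
  have hx : x₀ + h ∈ closedBall x₀ r := by simpa [dist_eq_norm] using hh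
  have := norm_sub_taylor_two_le_of_lipschitzOnWith
    (fun y hy => ((hball hy).1.differentiableAt (by norm_num)).hasFDerivAt)
    (fun y hy => (((hball hy).1.fderiv_right (m := 2) (by norm_num)).differentiableAt
      (by norm_num)).hasFDerivAt)
    (hlip.mono fun y hy => (hball hy).2) (hf.isSymmSndFDerivAt (by simp; norm_num)) hx
  simp only [add_sub_cancel_left] at this
  exact this.trans (by gcongr; simp)

theorem fderiv_fderiv_apply_eq_zero_of_isLocalMin {f : E → ℝ} {γ : ℝ → E} {v : E}
    (hmin : ∀ t, IsLocalMin f (γ t)) (hγ : HasDerivAt γ v 0)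
    (hf : DifferentiableAt ℝ (fderiv ℝ f) (γ 0)) :
    fderiv ℝ (fderiv ℝ f) (γ 0) v = 0 := by
  have hcrit : (fun t => fderiv ℝ f (γ t)) = fun _ => 0 :=
    funext fun t => (hmin t).fderiv_eq_zero
  have hderiv := hf.hasFDerivAt.comp_hasDerivAt 0 hγ
  rw [Function.comp_def, hcrit] at hderiv
  exact hderiv.unique (hasDerivAt_const 0 0)

theorem ContinuousLinearMap.apply_add_smul_apply_add_smul_of_apply_eq_zero
    {B : E →L[ℝ] E →L[ℝ] ℝ} (hB : ∀ v w, B v w = B w v) {k : E} (hk : B k = 0) (s : E) (a : ℝ) :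
    B (s + a • k) (s + a • k) = B s s := by
  simp [hk, hB s k]

end Calculus

def rotGen : Matrix (Fin 2) (Fin 2) ℝ := !![0, -1; 1, 0]

noncomputable def rot (θ : ℝ) : Matrix (Fin 2) (Fin 2) ℝ :=
  Real.cos θ • 1 + Real.sin θ • rotGen

theorem rot_eq (θ : ℝ) : rot θ = !![Real.cos θ, -Real.sin θ; Real.sin θ, Real.cos θ] := by
  ext i j
  fin_cases i <;> fin_cases j <;> simp [rot, rotGen]

theorem rot_mem_specialOrthogonal (θ : ℝ) : (rot θ)ᵀ * rot θ = 1 ∧ (rot θ).det = 1 := by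
  have h := Real.sin_sq_add_cos_sq θ
  refine ⟨?_, ?_⟩
  · rw [rot_eq]
    ext i j
    fin_cases i <;> fin_cases j <;> simp [Matrix.mul_apply, Fin.sum_univ_two] <;> linarith
  · rw [rot_eq, Matrix.det_fin_two_of]
    linarith

theorem rot_zero : rot 0 = 1 := by
  simp [rot]

theorem hasDerivAt_rot_zero : HasDerivAt rot rotGen 0 := by
  have h := ((Real.hasDerivAt_cos 0).smul_const (1 : Matrix (Fin 2) (Fin 2) ℝ)).add
    ((Real.hasDerivAt_sin 0).smul_const rotGen)
  simp only [Real.sin_zero, neg_zero, zero_smul, Real.cos_zero, one_smul, zero_add] at h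
  exact h

theorem eq_symPart_add_smul_rotGen (F : Matrix (Fin 2) (Fin 2) ℝ) :
    F = symPart F + ((F 1 0 - F 0 1) / 2) • rotGen := by
  ext i j
  fin_cases i <;> fin_cases j <;> simp [symPart, rotGen] <;> ring

theorem fderiv_fderiv_one_rotGen_eq_zero {W : Matrix (Fin 2) (Fin 2) ℝ → ℝ}
    (hmin : ∀ θ, IsLocalMin W (rot θ)) (hW : DifferentiableAt ℝ (fderiv ℝ W) 1) :
    fderiv ℝ (fderiv ℝ W) 1 rotGen = 0 := by
  rw [← rot_zero] at hW ⊢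
  exact fderiv_fderiv_apply_eq_zero_of_isLocalMin hmin hasDerivAt_rot_zero hW

theorem hessQ_symPart {W : Matrix (Fin 2) (Fin 2) ℝ → ℝ} (hW : IsSymmSndFDerivAt ℝ W 1)
    (hrot : fderiv ℝ (fderiv ℝ W) 1 rotGen = 0) (F : Matrix (Fin 2) (Fin 2) ℝ) :
    hessQ W (symPart F) = fderiv ℝ (fderiv ℝ W) 1 F F := by
  rw [hessQ]
  conv_rhs => rw [eq_symPart_add_smul_rotGen F]
  exact (ContinuousLinearMap.apply_add_smul_apply_add_smul_of_apply_eq_zero hW hrot _ _).symm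

-- `‖F‖` is the entrywise sup norm of the local instance `Matrix.normedAddCommGroup`.
theorem norm_le_frobNorm (F : Matrix (Fin 2) (Fin 2) ℝ) : ‖F‖ ≤ frobNorm F := by
  rw [frobNorm, Matrix.norm_le_iff (Real.sqrt_nonneg _)]
  intro i j
  rw [Real.norm_eq_abs]
  refine Real.abs_le_sqrt ?_
  calc F i j ^ 2 ≤ ∑ j', F i j' ^ 2 :=
        Finset.single_le_sum (f := fun j' => F i j' ^ 2) (fun _ _ => sq_nonneg _)
          (Finset.mem_univ j)
    _ ≤ ∑ i', ∑ j', F i' j' ^ 2 :=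
        Finset.single_le_sum (f := fun i' => ∑ j', F i' j' ^ 2)
          (fun _ _ => Finset.sum_nonneg fun _ _ => sq_nonneg _) (Finset.mem_univ i)

theorem W_taylor_expansion_general
    (W : Matrix (Fin 2) (Fin 2) ℝ → ℝ)
    (hWnonneg : ∀ F, 0 ≤ W F)
    (U : Set (Matrix (Fin 2) (Fin 2) ℝ)) (hUopen : IsOpen U)
    (hUSO : {R : Matrix (Fin 2) (Fin 2) ℝ | Rᵀ * R = 1 ∧ R.det = 1} ⊆ U)
    (hC3 : ContDiffOn ℝ 3 W U)
    (hzero : ∀ F : Matrix (Fin 2) (Fin 2) ℝ, W F = 0 ↔ (Fᵀ * F = 1 ∧ F.det = 1)) :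
    ∃ δ : ℝ, 0 < δ ∧ δ ≤ 1 ∧ ∃ C : ℝ, 0 < C ∧
      ∀ F : Matrix (Fin 2) (Fin 2) ℝ, frobNorm F ≤ δ →
        |W (1 + F) - 1 / 2 * hessQ W (symPart F)| ≤ C * frobNorm F ^ 3 := by
  have hmin : ∀ R : Matrix (Fin 2) (Fin 2) ℝ, Rᵀ * R = 1 ∧ R.det = 1 → IsLocalMin W R :=
    fun R hR => Filter.Eventually.of_forall fun F => ((hzero R).2 hR).symm ▸ hWnonneg F
  have hone : (1 : Matrix (Fin 2) (Fin 2) ℝ)ᵀ * 1 = 1 ∧ (1 : Matrix (Fin 2) (Fin 2) ℝ).det = 1 :=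
    ⟨by simp, by simp⟩
  have hW : ContDiffAt ℝ 3 W 1 := hC3.contDiffAt (hUopen.mem_nhds (hUSO hone))
  have hrot : fderiv ℝ (fderiv ℝ W) 1 rotGen = 0 :=
    fderiv_fderiv_one_rotGen_eq_zero (fun θ => hmin _ (rot_mem_specialOrthogonal θ))
      ((hW.fderiv_right (m := 2) (by norm_num)).differentiableAt (by norm_num))
  obtain ⟨C, hC, r, hr, htaylor⟩ := hW.exists_norm_sub_taylor_two_le
  refine ⟨min r 1, by positivity, min_le_right _ _, C, hC, fun F hF => ?_⟩
  have hFr : ‖F‖ ≤ r := (norm_le_frobNorm F).trans (hF.trans (min_le_left _ _))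
  have hbound := htaylor F hFr
  rw [(hzero 1).2 hone, (hmin 1 hone).fderiv_eq_zero, Real.norm_eq_abs] at hbound
  rw [hessQ_symPart (hW.isSymmSndFDerivAt (by simp; norm_num)) hrot]
  calc _ ≤ C * ‖F‖ ^ 3 := by
        simp only [sub_zero, _root_.zero_apply, smul_eq_mul, ← one_div] at hbound
        exact hbound
    _ ≤ C * frobNorm F ^ 3 := by gcongr; exact norm_le_frobNorm F

/-- Taylor expansion: if `W` is continuous, nonnegative, `C³` near `SO(2)`,
frame indifferent and vanishes exactly on `SO(2)`, then there are `δ ∈ (0,1]` and `C > 0`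
such that `|W(Id + F) − (1/2)D²W(Id)[sym F, sym F]| ≤ C‖F‖³` whenever `‖F‖ ≤ δ`. -/
theorem W_taylor_expansion
    (W : Matrix (Fin 2) (Fin 2) ℝ → ℝ)
    (hWcont : Continuous W) (hWnonneg : ∀ F, 0 ≤ W F)
    (U : Set (Matrix (Fin 2) (Fin 2) ℝ)) (hUopen : IsOpen U)
    (hUSO : {R : Matrix (Fin 2) (Fin 2) ℝ | Rᵀ * R = 1 ∧ R.det = 1} ⊆ U)
    (hC3 : ContDiffOn ℝ 3 W U)
    (hframe : ∀ R F : Matrix (Fin 2) (Fin 2) ℝ, Rᵀ * R = 1 → R.det = 1 → W (R * F) = W F)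
    (hzero : ∀ F : Matrix (Fin 2) (Fin 2) ℝ, W F = 0 ↔ (Fᵀ * F = 1 ∧ F.det = 1)) :
    ∃ δ : ℝ, 0 < δ ∧ δ ≤ 1 ∧ ∃ C : ℝ, 0 < C ∧
      ∀ F : Matrix (Fin 2) (Fin 2) ℝ, frobNorm F ≤ δ →
        |W (1 + F) - 1 / 2 * hessQ W (symPart F)| ≤ C * frobNorm F ^ 3 :=
  W_taylor_expansion_general W hWnonneg U hUopen hUSO hC3 hzero
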